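/- arXiv:2604.26354 — 4 statements merged into one kernel-verified Lean document; each statement's English description precedes it below -/
import Mathlib

section
/- There exists a unique formal power series v ∈ ℚ⟦x⟧ with zero constant coefficient such that 6x = (1 − 9v + 18v²)·v; its expansion begins v = 6x + 324x² + 31104x³ + ⋯. Moreover, setting w := x·(1 − 6v)⁻¹ ∈ ℚ⟦x⟧ (note 1 − 6v is invertible since it has constant term 1), one has (1 − 6v)² = 1 − 72w and x² = w² − 72w³; the series w = x + 36x² + 3240x³ + ⋯ is the unique formal power series with constant coefficient 0 and coefficient of x equal to 1 satisfying x² = w² − 72w³; and w·(1 − 108w)·D(w) = x, where D is the formal derivative d/dx. -/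
/-!
With `u = 1 - 6v` the defining equation becomes `u³ = u - 72x`. The cubic `T³ - T + 72x` is monic
and reduces modulo `x` to `T³ - T`, which has `1` as a simple root, so Hensel's lemma in the
complete local ring `ℚ⟦x⟧` gives a unique root `u` with constant term `1`.

Since `w u = x`, dividing `u³ = u - 72 w u` by `u` gives `u² = 1 - 72w`, hence
`x² = w² u² = w² - 72w³`; differentiating this yields `w (1 - 108w) w' = x`. Two solutions
of `x² = w² - 72w³` satisfy `(w - w') (w + w' - 72(w² + w w' + w'²)) = 0`, and the second
factor has `x`-coefficient `2` when both start with `x`. The coefficients of `w` follow from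
`6w = v - 3v²`.
-/

open PowerSeries

/-- The formal derivative `d/dx` on `ℚ⟦x⟧`. -/
noncomputable def D : PowerSeries ℚ → PowerSeries ℚ := PowerSeries.derivativeFun

namespace PowerSeries

instance {R : Type*} [Semiring R] [CharZero R] : CharZero R⟦X⟧ :=
  charZero_of_injective_ringHom C_injective

section Coefficients

variable {R : Type*} [CommRing R] {f g : R⟦X⟧}

theorem coeff_one_mul_of_constantCoeff_eq_zero (hf : constantCoeff f = 0)
    (hg : constantCoeff g = 0) : coeff 1 (f * g) = 0 := by
  simp [coeff_mul, Finset.Nat.sum_antidiagonal_eq_sum_range_succ_mk, Finset.sum_range_succ, hf, hg]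

theorem coeff_two_mul_of_constantCoeff_eq_zero (hf : constantCoeff f = 0)
    (hg : constantCoeff g = 0) : coeff 2 (f * g) = coeff 1 f * coeff 1 g := by
  simp [coeff_mul, Finset.Nat.sum_antidiagonal_eq_sum_range_succ_mk, Finset.sum_range_succ, hf, hg]

theorem coeff_three_mul_of_constantCoeff_eq_zero (hf : constantCoeff f = 0)
    (hg : constantCoeff g = 0) :
    coeff 3 (f * g) = coeff 1 f * coeff 2 g + coeff 2 f * coeff 1 g := by
  simp [coeff_mul, Finset.Nat.sum_antidiagonal_eq_sum_range_succ_mk, Finset.sum_range_succ, hf, hg]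

end Coefficients

section Hensel

variable {R : Type*} [CommRing R] {f : Polynomial R⟦X⟧}

theorem exists_isRoot_of_isRoot_map_constantCoeff (hf : f.Monic) {a₀ : R}
    (h₀ : (f.map constantCoeff).IsRoot a₀)
    (h₁ : IsUnit ((f.map constantCoeff).derivative.eval a₀)) :
    ∃ a : R⟦X⟧, f.IsRoot a ∧ constantCoeff a = a₀ := by
  have hunit : IsUnit (f.derivative.eval (C a₀)) := by
    rwa [isUnit_iff_constantCoeff, ← Polynomial.eval_map_apply, constantCoeff_C,
      ← Polynomial.derivative_map]
  obtain ⟨a, ha, haC⟩ := HenselianRing.is_henselian (I := Ideal.span {X}) f hf (C a₀)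
    (by rwa [Ideal.mem_span_singleton, X_dvd_iff, ← Polynomial.eval_map_apply, constantCoeff_C])
    (hunit.map _)
  rw [Ideal.mem_span_singleton, X_dvd_iff, map_sub, constantCoeff_C, sub_eq_zero] at haC
  exact ⟨a, ha, haC⟩

theorem eq_of_isRoot_of_constantCoeff_eq [IsLocalRing R] {a b : R⟦X⟧} (ha : f.IsRoot a)
    (hb : f.IsRoot b) (hab : constantCoeff a = constantCoeff b)
    (h₁ : IsUnit ((f.map constantCoeff).derivative.eval (constantCoeff a))) : a = b := by
  refine IsLocalRing.eq_of_eval_eq_zero_of_not_isUnit_sub ha hb ?_ ?_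
  · rw [isUnit_iff_constantCoeff, map_sub, hab, sub_self]
    exact not_isUnit_zero
  · rwa [isUnit_iff_constantCoeff, ← Polynomial.eval_map_apply, ← Polynomial.derivative_map]

end Hensel

section SquareSubCube

variable {R : Type*} [CommRing R] [IsDomain R] [CharZero R]

theorem eq_of_sq_sub_cube_eq {w w' : R⟦X⟧} (h₀ : constantCoeff w = 0) (h₁ : coeff 1 w = 1)
    (h₀' : constantCoeff w' = 0) (h₁' : coeff 1 w' = 1)
    (h : w ^ 2 - 72 * w ^ 3 = w' ^ 2 - 72 * w' ^ 3) : w = w' := by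
  set q := w + w' - C 72 * (w * w + w * w' + w' * w')
  have hfactor : (w - w') * q = 0 := by
    simp only [q, map_ofNat]
    linear_combination h
  have hq : coeff 1 q = 2 := by
    simp only [q, map_sub, map_add, coeff_C_mul, coeff_one_mul_of_constantCoeff_eq_zero,
      h₀, h₀', h₁, h₁']
    norm_num
  have hq0 : q ≠ 0 := fun h0 => by simp [h0] at hq
  exact sub_eq_zero.1 ((mul_eq_zero.1 hfactor).resolve_right hq0)

theorem mul_one_sub_mul_derivative_eq_X {w : R⟦X⟧} (h : X ^ 2 = w ^ 2 - 72 * w ^ 3) :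
    w * (1 - 108 * w) * d⁄dX R w = X := by
  have hd := congrArg (d⁄dX R) h
  have h72 : d⁄dX R (72 : R⟦X⟧) = 0 := by exact_mod_cast (d⁄dX R).map_natCast 72
  simp only [map_sub, Derivation.leibniz, Derivation.leibniz_pow, derivative_X, h72] at hd
  apply mul_left_cancel₀ (two_ne_zero (α := R⟦X⟧))
  linear_combination -hd

end SquareSubCube

end PowerSeries

theorem existsUnique_cube_eq_sub_and_constantCoeff_eq_one :
    ∃! u : PowerSeries ℚ, u ^ 3 = u - 72 * X ∧ constantCoeff u = 1 := by
  set f : Polynomial (PowerSeries ℚ) := Polynomial.X ^ 3 - Polynomial.X + Polynomial.C (72 * X)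
  have hroot (u : PowerSeries ℚ) : f.IsRoot u ↔ u ^ 3 = u - 72 * X := by
    simp only [f, Polynomial.IsRoot, Polynomial.eval_add, Polynomial.eval_sub,
      Polynomial.eval_pow, Polynomial.eval_X, Polynomial.eval_C]
    constructor <;> intro h <;> linear_combination h
  have hmap : f.map constantCoeff = Polynomial.X ^ 3 - Polynomial.X := by simp [f]
  have hderiv : IsUnit ((f.map constantCoeff).derivative.eval 1) := by
    rw [hmap]
    simp only [Polynomial.derivative_sub, Polynomial.derivative_X_pow, Polynomial.derivative_X,
      Polynomial.eval_sub, Polynomial.eval_mul, Polynomial.eval_C, Polynomial.eval_pow,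
      Polynomial.eval_one]
    norm_num
  have hf : f.Monic := by
    unfold f
    monicity!
  obtain ⟨u, hu, hu1⟩ := exists_isRoot_of_isRoot_map_constantCoeff hf (by simp [hmap]) hderiv
  refine ⟨u, ⟨(hroot u).1 hu, hu1⟩, fun u' ⟨hu', hu'1⟩ => ?_⟩
  exact eq_of_isRoot_of_constantCoeff_eq ((hroot u').2 hu') hu (hu'1.trans hu1.symm)
    (by rwa [hu'1])

section Solution

variable {v w : PowerSeries ℚ}

theorem cube_eq_and_constantCoeff_eq_one_iff :
    ((1 - 6 * v) ^ 3 = 1 - 6 * v - 72 * X ∧ constantCoeff (1 - 6 * v) = 1) ↔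
      (constantCoeff v = 0 ∧ 6 * X = (1 - 9 * v + 18 * v ^ 2) * v) := by
  have hcube : (1 - 6 * v) ^ 3 - (1 - 6 * v - 72 * X) =
      12 * (6 * X - (1 - 9 * v + 18 * v ^ 2) * v) := by ring
  refine and_comm.trans (and_congr ?_ ?_)
  · simp [map_ofNat]
  · rw [← sub_eq_zero, hcube, mul_eq_zero, sub_eq_zero]
    simp

theorem existsUnique_constantCoeff_eq_zero_and_eq :
    ∃! v : PowerSeries ℚ, constantCoeff v = 0 ∧ 6 * X = (1 - 9 * v + 18 * v ^ 2) * v := by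
  obtain ⟨u, hu, huniq⟩ := existsUnique_cube_eq_sub_and_constantCoeff_eq_one
  obtain ⟨v, rfl⟩ : ∃ v, u = 1 - 6 * v :=
    ⟨C (1 / 6) * (1 - u), by rw [← mul_assoc, ← map_ofNat C 6, ← map_mul]; norm_num⟩
  refine ⟨v, cube_eq_and_constantCoeff_eq_one_iff.1 hu, fun v' hv' => ?_⟩
  have h := huniq _ (cube_eq_and_constantCoeff_eq_one_iff.2 hv')
  exact mul_left_cancel₀ (by norm_num) (sub_right_injective h)

theorem coeff_of_six_mul_X_eq (hv0 : constantCoeff v = 0)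
    (hv : 6 * X = (1 - 9 * v + 18 * v ^ 2) * v) :
    coeff 1 v = 6 ∧ coeff 2 v = 324 ∧ coeff 3 v = 31104 := by
  have hv' : C 6 * X = v - C 9 * (v * v) + C 18 * (v * (v * v)) := by
    simp only [map_ofNat]
    linear_combination hv
  have h1 := congrArg (coeff 1) hv'
  have h2 := congrArg (coeff 2) hv'
  have h3 := congrArg (coeff 3) hv'
  simp only [coeff_succ_mul_X, coeff_zero_C, map_add, map_sub, coeff_C_mul, hv0, map_mul,
    coeff_succ_C, coeff_one_mul_of_constantCoeff_eq_zero, coeff_two_mul_of_constantCoeff_eq_zero,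
    coeff_three_mul_of_constantCoeff_eq_zero, mul_zero, sub_zero, add_zero] at h1 h2 h3
  rw [← h1] at h2 h3
  have h2' : coeff 2 v = 324 := by linarith
  rw [h2'] at h3
  exact ⟨h1.symm, h2', by linarith⟩

theorem mul_one_sub_six_mul_eq_X (hv0 : constantCoeff v = 0) (hw : w = X * (1 - 6 * v)⁻¹) :
    w * (1 - 6 * v) = X := by
  rw [hw, mul_assoc, PowerSeries.inv_mul_cancel _ (by simp [hv0]), mul_one]

theorem one_sub_six_mul_sq_eq (hv0 : constantCoeff v = 0)
    (hv : 6 * X = (1 - 9 * v + 18 * v ^ 2) * v) (hw : w = X * (1 - 6 * v)⁻¹) :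
    (1 - 6 * v) ^ 2 = 1 - 72 * w := by
  have hu : 1 - 6 * v ≠ 0 := fun h => by simpa [hv0] using congrArg constantCoeff h
  apply mul_right_cancel₀ hu
  linear_combination (12 : PowerSeries ℚ) * hv + 72 * mul_one_sub_six_mul_eq_X hv0 hw

theorem six_mul_eq_of_one_sub_six_mul_sq_eq (h : (1 - 6 * v) ^ 2 = 1 - 72 * w) :
    6 * w = v - 3 * v ^ 2 := by
  apply mul_left_cancel₀ (show (12 : PowerSeries ℚ) ≠ 0 by norm_num)
  linear_combination h

theorem coeff_of_six_mul_eq_sub_three_mul_sq (hv0 : constantCoeff v = 0)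
    (hv : 6 * X = (1 - 9 * v + 18 * v ^ 2) * v)
    (hw : 6 * w = v - 3 * v ^ 2) : coeff 1 w = 1 ∧ coeff 2 w = 36 ∧ coeff 3 w = 3240 := by
  have hw' : C 6 * w = v - C 3 * (v * v) := by
    simp only [map_ofNat]
    linear_combination hw
  obtain ⟨c1, c2, c3⟩ := coeff_of_six_mul_X_eq hv0 hv
  have h1 := congrArg (coeff 1) hw'
  have h2 := congrArg (coeff 2) hw'
  have h3 := congrArg (coeff 3) hw'
  simp only [map_sub, coeff_C_mul, coeff_one_mul_of_constantCoeff_eq_zero,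
    coeff_two_mul_of_constantCoeff_eq_zero, coeff_three_mul_of_constantCoeff_eq_zero, hv0, c1, c2,
    c3, mul_zero, sub_zero] at h1 h2 h3
  exact ⟨by linarith, by linarith, by linarith⟩

end Solution

theorem stmt0 :
    (∃! v : PowerSeries ℚ, constantCoeff v = 0 ∧
        6 * X = (1 - 9 * v + 18 * v ^ 2) * v) ∧
    (∀ v : PowerSeries ℚ, constantCoeff v = 0 →
      6 * X = (1 - 9 * v + 18 * v ^ 2) * v →
      coeff 1 v = 6 ∧ coeff 2 v = 324 ∧ coeff 3 v = 31104 ∧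
      ∀ w : PowerSeries ℚ, w = X * (1 - 6 * v)⁻¹ →
        (1 - 6 * v) ^ 2 = 1 - 72 * w ∧
        X ^ 2 = w ^ 2 - 72 * w ^ 3 ∧
        constantCoeff w = 0 ∧ coeff 1 w = 1 ∧
        coeff 2 w = 36 ∧ coeff 3 w = 3240 ∧
        (∀ w' : PowerSeries ℚ, constantCoeff w' = 0 → coeff 1 w' = 1 →
          X ^ 2 = w' ^ 2 - 72 * w' ^ 3 → w' = w) ∧
        w * (1 - 108 * w) * D w = X) := by
  refine ⟨existsUnique_constantCoeff_eq_zero_and_eq, fun v hv0 hv => ?_⟩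
  obtain ⟨hv1, hv2, hv3⟩ := coeff_of_six_mul_X_eq hv0 hv
  refine ⟨hv1, hv2, hv3, fun w hw => ?_⟩
  have hX : w * (1 - 6 * v) = X := mul_one_sub_six_mul_eq_X hv0 hw
  have hsq : (1 - 6 * v) ^ 2 = 1 - 72 * w := one_sub_six_mul_sq_eq hv0 hv hw
  have hcurve : X ^ 2 = w ^ 2 - 72 * w ^ 3 := by
    linear_combination w ^ 2 * hsq - (w * (1 - 6 * v) + X) * hX
  have hw0 : constantCoeff w = 0 := by simp [hw]
  obtain ⟨hw1, hw2, hw3⟩ :=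
    coeff_of_six_mul_eq_sub_three_mul_sq hv0 hv (six_mul_eq_of_one_sub_six_mul_sq_eq hsq)
  refine ⟨hsq, hcurve, hw0, hw1, hw2, hw3, fun w' hw'0 hw'1 hw' => ?_,
    mul_one_sub_mul_derivative_eq_X hcurve⟩
  exact eq_of_sq_sub_cube_eq hw'0 hw'1 hw0 hw1 (hw'.symm.trans hcurve)
end

section
/- For every integer k ≥ 1 there exist polynomials T_{k,1}, …, T_{k,2k} ∈ ℚ[y], each of degree at most k, such that for every formal power series f ∈ ℚ⟦y⟧ one has in ℚ⟦x⟧: (1 − 108w)^{4k} · D^{2k}( f(w) ) = Σ_{i=1}^{2k} T_{k,i}(w) · (1 − 108w)^{i} · f^{(i)}(w), where f(w) and f^{(i)}(w) denote substitution of w into f and into its i-th formal derivative (well defined since w has zero constant term), and D^{2k} is the (2k)-th formal derivative with respect to x. -/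
/-!
Differentiating `x² = w² - 72 w³` gives `w (1 - 108 w) Dw = x`, hence
`(1 - 108 w)² (Dw)² = 1 - 72 w` and `(1 - 108 w)³ D²w = 72 - 3888 w`. By the chain rule,
`D² (F(w)) = (𝓛 F)(w)` for the operator `𝓛 = (1 - 72 y) u⁻² d² + (72 - 3888 y) u⁻³ d` on `ℚ⟦y⟧`,
where `u = 1 - 108 y` and `d = d/dy`. So `D^{2k} (f(w)) = (𝓛^k f)(w)`, and it remains to write
`u^{4k} 𝓛^k` as `∑_{i=1}^{2k} T_i u^i d^i` with `deg T_i ≤ k`.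

With `E = u d`, conjugation by `u^m` turns `E` into `E + 108 m`, and
`u^{m+4} 𝓛 u^{-m} = (1 - 72 y) (E + 108 m)² + (180 - 11664 y) (E + 108 m)`.
Since `E (c u^i d^i) = (u c' - 108 i c) u^i d^i + c u^{i+1} d^{i+1}`, the operator `E` maps
`∑_{i=1}^n c_i u^i d^i` with `deg c_i ≤ e` to an operator of the same shape with `n + 1` terms and
the same degree bound `e`, while multiplication by a linear polynomial raises `e` by one.
-/

open PowerSeries

/-- Substitution of a power series `w` with zero constant term into a power series `f`:
the `n`-th coefficient of `f(w)` only depends on the truncation of `f` at order `n + 1`. -/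
noncomputable def psSubst (w f : PowerSeries ℚ) : PowerSeries ℚ :=
  PowerSeries.mk fun n => PowerSeries.coeff n (Polynomial.aeval w (PowerSeries.trunc (n + 1) f))

@[simp] theorem Polynomial.coe_ofNat {R : Type*} [CommSemiring R] (n : ℕ) [n.AtLeastTwo] :
    ((ofNat(n) : Polynomial R) : R⟦X⟧) = ofNat(n) :=
  map_ofNat Polynomial.coeToPowerSeries.ringHom n

@[simp] theorem PowerSeries.derivative_ofNat {R : Type*} [CommSemiring R] (n : ℕ) [n.AtLeastTwo] :
    d⁄dX R (ofNat(n) : R⟦X⟧) = 0 := by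
  rw [← map_ofNat (C (R := R)) n, derivative_C]

section TwistedDeriv

variable {R : Type*} [CommRing R]

noncomputable def twistedDeriv (u : Polynomial R) : R⟦X⟧ →ₗ[R] R⟦X⟧ :=
  LinearMap.mulLeft R (u : R⟦X⟧) ∘ₗ (d⁄dX R).toLinearMap

theorem twistedDeriv_apply (u : Polynomial R) (F : R⟦X⟧) :
    twistedDeriv u F = u * d⁄dX R F := rfl

noncomputable def diffOpSpan (u : Polynomial R) (d n : ℕ) : Submodule R (R⟦X⟧ → R⟦X⟧) :=
  Submodule.span R {Φ | ∃ c : Polynomial R, c.natDegree ≤ d ∧ ∃ i ∈ Finset.Icc 1 n,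
    Φ = fun f => ((c * u ^ i : Polynomial R) : R⟦X⟧) * (d⁄dX R)^[i] f}

variable {u : Polynomial R}

theorem twistedDeriv_coe_pow_mul (m : ℕ) (G : R⟦X⟧) :
    twistedDeriv u ((u : R⟦X⟧) ^ m * G) =
      (u : R⟦X⟧) ^ m * twistedDeriv u G +
        (m : R⟦X⟧) * (Polynomial.derivative u : R⟦X⟧) * ((u : R⟦X⟧) ^ m * G) := by
  induction m generalizing G with
  | zero => simp
  | succ m ih =>
    rw [pow_succ, mul_assoc, ih, twistedDeriv_apply, twistedDeriv_apply, Derivation.leibniz,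
      derivative_coe, smul_eq_mul, smul_eq_mul]
    push_cast
    ring

theorem mul_derivative_mul_pow (c : Polynomial R) (i : ℕ) :
    u * Polynomial.derivative (c * u ^ i) =
      (u * Polynomial.derivative c + Polynomial.C (i : R) * Polynomial.derivative u * c) *
        u ^ i := by
  cases i with
  | zero => simp
  | succ j =>
    rw [Polynomial.derivative_mul, Polynomial.derivative_pow, Nat.add_sub_cancel]
    ring

theorem natDegree_mul_derivative_add_le (hu : u.natDegree ≤ 1) (c : Polynomial R) (r : R) :
    (u * Polynomial.derivative c + Polynomial.C r * Polynomial.derivative u * c).natDegree ≤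
      c.natDegree := by
  refine Polynomial.natDegree_add_le_of_degree_le ?_ ?_
  · rcases Nat.eq_zero_or_pos c.natDegree with hc | hc
    · rw [Polynomial.eq_C_of_natDegree_eq_zero hc, Polynomial.derivative_C, mul_zero,
        Polynomial.natDegree_zero]
      exact Nat.zero_le _
    · exact (Polynomial.natDegree_mul_le_of_le hu (Polynomial.natDegree_derivative_le c)).trans
        (by omega)
  · have hu' : (Polynomial.derivative u).natDegree ≤ 0 :=
      (Polynomial.natDegree_derivative_le u).trans (by omega)
    exact (Polynomial.natDegree_mul_le_of_le (Polynomial.natDegree_mul_le_of_le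
      (Polynomial.natDegree_C r).le hu') le_rfl).trans (by omega)

theorem twistedDeriv_coe_mul_iterate (c : Polynomial R) (i : ℕ) (f : R⟦X⟧) :
    twistedDeriv u (((c * u ^ i : Polynomial R) : R⟦X⟧) * (d⁄dX R)^[i] f) =
      (((u * Polynomial.derivative c + Polynomial.C (i : R) * Polynomial.derivative u * c) *
          u ^ i : Polynomial R) : R⟦X⟧) * (d⁄dX R)^[i] f +
        ((c * u ^ (i + 1) : Polynomial R) : R⟦X⟧) * (d⁄dX R)^[i + 1] f := by
  have hcoe : (u : R⟦X⟧) * (Polynomial.derivative (c * u ^ i) : R⟦X⟧) =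
      (((u * Polynomial.derivative c + Polynomial.C (i : R) * Polynomial.derivative u * c) *
        u ^ i : Polynomial R) : R⟦X⟧) := by
    rw [← Polynomial.coe_mul, mul_derivative_mul_pow c i]
  have hcoe' : ((c * u ^ (i + 1) : Polynomial R) : R⟦X⟧) =
      u * ((c * u ^ i : Polynomial R) : R⟦X⟧) := by
    push_cast
    ring
  rw [twistedDeriv_apply, Derivation.leibniz, derivative_coe, Function.iterate_succ_apply',
    smul_eq_mul, smul_eq_mul]
  linear_combination (d⁄dX R)^[i] f * hcoe - d⁄dX R ((d⁄dX R)^[i] f) * hcoe'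

theorem diffOpSpan_mono {d d' n n' : ℕ} (hd : d ≤ d') (hn : n ≤ n') :
    diffOpSpan u d n ≤ diffOpSpan u d' n' := by
  refine Submodule.span_mono ?_
  rintro _ ⟨c, hc, i, hi, rfl⟩
  exact ⟨c, hc.trans hd, i, Finset.Icc_subset_Icc le_rfl hn hi, rfl⟩

theorem comp_mem_diffOpSpan (A : R⟦X⟧ →ₗ[R] R⟦X⟧) {d n d' n' : ℕ}
    (hA : ∀ c : Polynomial R, c.natDegree ≤ d → ∀ i ∈ Finset.Icc 1 n,
      (fun f => A (((c * u ^ i : Polynomial R) : R⟦X⟧) * (d⁄dX R)^[i] f)) ∈ diffOpSpan u d' n')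
    {Φ : R⟦X⟧ → R⟦X⟧} (hΦ : Φ ∈ diffOpSpan u d n) : A ∘ Φ ∈ diffOpSpan u d' n' := by
  suffices diffOpSpan u d n ≤ (diffOpSpan u d' n').comap (LinearMap.compLeft A R⟦X⟧) from
    this hΦ
  refine Submodule.span_le.mpr ?_
  rintro _ ⟨c, hc, i, hi, rfl⟩
  exact hA c hc i hi

theorem coe_mul_comp_mem_diffOpSpan {p : Polynomial R} {e d n : ℕ} (hp : p.natDegree ≤ e)
    {Φ : R⟦X⟧ → R⟦X⟧} (hΦ : Φ ∈ diffOpSpan u d n) :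
    (fun f => (p : R⟦X⟧) * Φ f) ∈ diffOpSpan u (d + e) n := by
  refine comp_mem_diffOpSpan (LinearMap.mulLeft R (p : R⟦X⟧)) (fun c hc i hi => ?_) hΦ
  refine Submodule.subset_span
    ⟨p * c, (Polynomial.natDegree_mul_le_of_le hp hc).trans_eq (add_comm e d), i, hi, ?_⟩
  ext f
  simp [mul_assoc]

theorem twistedDeriv_comp_mem_diffOpSpan (hu : u.natDegree ≤ 1) {d n : ℕ}
    {Φ : R⟦X⟧ → R⟦X⟧} (hΦ : Φ ∈ diffOpSpan u d n) :
    twistedDeriv u ∘ Φ ∈ diffOpSpan u d (n + 1) := by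
  refine comp_mem_diffOpSpan _ (fun c hc i hi => ?_) hΦ
  obtain ⟨hi1, hin⟩ := Finset.mem_Icc.mp hi
  simp_rw [twistedDeriv_coe_mul_iterate c i]
  exact add_mem
    (Submodule.subset_span ⟨_, (natDegree_mul_derivative_add_le hu c _).trans hc, i,
      Finset.mem_Icc.mpr ⟨hi1, by omega⟩, rfl⟩)
    (Submodule.subset_span ⟨c, hc, i + 1, Finset.mem_Icc.mpr ⟨by omega, by omega⟩, rfl⟩)

theorem twistedDeriv_add_smul_comp_mem_diffOpSpan (hu : u.natDegree ≤ 1) (b : R) {d n : ℕ}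
    {Φ : R⟦X⟧ → R⟦X⟧} (hΦ : Φ ∈ diffOpSpan u d n) :
    ⇑(twistedDeriv u + b • LinearMap.id (R := R) (M := R⟦X⟧)) ∘ Φ ∈ diffOpSpan u d (n + 1) :=
  add_mem (twistedDeriv_comp_mem_diffOpSpan hu hΦ)
    (Submodule.smul_mem _ b (diffOpSpan_mono le_rfl n.le_succ hΦ))

theorem exists_eq_sum_of_mem_diffOpSpan {d n : ℕ} {Φ : R⟦X⟧ → R⟦X⟧}
    (hΦ : Φ ∈ diffOpSpan u d n) :
    ∃ T : ℕ → Polynomial R, (∀ i, (T i).natDegree ≤ d) ∧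
      ∀ f, Φ f = ∑ i ∈ Finset.Icc 1 n, ((T i * u ^ i : Polynomial R) : R⟦X⟧) * (d⁄dX R)^[i] f := by
  induction hΦ using Submodule.span_induction with
  | mem Φ hΦ =>
    obtain ⟨c, hc, i, hi, rfl⟩ := hΦ
    refine ⟨fun j => if j = i then c else 0, fun j => ?_, fun f => ?_⟩
    · dsimp only
      split_ifs <;> simp [hc]
    · rw [Finset.sum_eq_single_of_mem i hi (fun j _ hj => by simp [hj])]
      simp
  | zero => exact ⟨0, fun _ => by simp, fun _ => by simp⟩
  | add Φ Ψ _ _ hΦ hΨ =>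
    obtain ⟨T, hTd, hT⟩ := hΦ
    obtain ⟨S, hSd, hS⟩ := hΨ
    refine ⟨T + S, fun i => Polynomial.natDegree_add_le_of_degree_le (hTd i) (hSd i),
      fun f => ?_⟩
    simp [hT, hS, add_mul, Finset.sum_add_distrib]
  | smul b Φ _ hΦ =>
    obtain ⟨T, hTd, hT⟩ := hΦ
    refine ⟨b • T, fun i => (Polynomial.natDegree_smul_le _ _).trans (hTd i), fun f => ?_⟩
    simp [hT, Finset.smul_sum, Polynomial.coe_smul]

end TwistedDeriv

theorem psSubst_eq_subst {w : ℚ⟦X⟧} (hw0 : constantCoeff w = 0) (f : ℚ⟦X⟧) :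
    psSubst w f = f.subst w := by
  have hw : HasSubst w := .of_constantCoeff_zero' hw0
  ext n
  rw [psSubst, coeff_mk, ← subst_coe hw, coeff_subst' hw, coeff_subst' hw]
  refine finsum_congr fun d ↦ ?_
  obtain hd | hd := lt_or_ge n d
  · have : X ^ d ∣ w ^ d := pow_dvd_pow_of_dvd (X_dvd_iff.mpr hw0) d
    simp [X_pow_dvd_iff.mp this n hd]
  · rw [coeff_coe_trunc_of_lt (by omega)]

instance : CharZero ℚ⟦X⟧ := charZero_of_injective_algebraMap (algebraMap ℚ ℚ⟦X⟧).injective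

/-- The operator `𝓛` with `D² (F(w)) = (𝓛 F)(w)`. -/
noncomputable def secondDerivOp (F : ℚ⟦X⟧) : ℚ⟦X⟧ :=
  ((1 - 108 * X) ^ 4)⁻¹ * ((1 - 72 * X) * (1 - 108 * X) ^ 2 * d⁄dX ℚ (d⁄dX ℚ F)
    + (72 - 3888 * X) * (1 - 108 * X) * d⁄dX ℚ F)

section Curve

variable {w : ℚ⟦X⟧}

theorem mul_one_sub_mul_derivative (hw : (X : ℚ⟦X⟧) ^ 2 = w ^ 2 - 72 * w ^ 3) :
    w * (1 - 108 * w) * d⁄dX ℚ w = X := by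
  have h := congrArg (d⁄dX ℚ) hw
  simp only [Derivation.leibniz_pow, Nat.add_one_sub_one, pow_one, derivative_X, smul_eq_mul,
    mul_one, nsmul_eq_mul, Nat.cast_ofNat, map_sub, Derivation.leibniz, derivative_ofNat, mul_zero,
    add_zero] at h
  apply mul_left_cancel₀ two_ne_zero
  linear_combination -h

theorem sq_one_sub_mul_sq_derivative (hw1 : coeff 1 w = 1)
    (hw : (X : ℚ⟦X⟧) ^ 2 = w ^ 2 - 72 * w ^ 3) :
    (1 - 108 * w) ^ 2 * d⁄dX ℚ w ^ 2 = 1 - 72 * w := by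
  have hw_ne : w ≠ 0 := by rintro rfl; simp at hw1
  apply mul_left_cancel₀ (pow_ne_zero 2 hw_ne)
  linear_combination (w * (1 - 108 * w) * d⁄dX ℚ w + X) * mul_one_sub_mul_derivative hw + hw

theorem cube_one_sub_mul_derivative_derivative (hw1 : coeff 1 w = 1)
    (hw : (X : ℚ⟦X⟧) ^ 2 = w ^ 2 - 72 * w ^ 3) :
    (1 - 108 * w) ^ 3 * d⁄dX ℚ (d⁄dX ℚ w) = 72 - 3888 * w := by
  have hsq := sq_one_sub_mul_sq_derivative hw1 hw
  have h := congrArg (d⁄dX ℚ) hsq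
  simp only [Derivation.leibniz, Derivation.leibniz_pow, Nat.add_one_sub_one, pow_one, smul_eq_mul,
    nsmul_eq_mul, Nat.cast_ofNat, map_sub, Derivation.map_one_eq_zero, derivative_ofNat, mul_zero,
    add_zero, zero_sub, mul_neg, smul_neg] at h
  have hw' : d⁄dX ℚ w ≠ 0 := by
    intro h0
    have := congrArg (coeff 0) h0
    rw [coeff_derivative] at this
    simp [hw1] at this
  apply mul_left_cancel₀ (mul_ne_zero two_ne_zero hw')
  linear_combination (1 - 108 * w) * h + 216 * d⁄dX ℚ w * hsq

theorem derivative_derivative_subst (hw0 : constantCoeff w = 0) (hw1 : coeff 1 w = 1)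
    (hw : (X : ℚ⟦X⟧) ^ 2 = w ^ 2 - 72 * w ^ 3) (F : ℚ⟦X⟧) :
    d⁄dX ℚ (d⁄dX ℚ (F.subst w)) = (secondDerivOp F).subst w := by
  have hs : HasSubst w := .of_constantCoeff_zero' hw0
  set φ := substAlgHom (R := ℚ) hs
  have hφ : ∀ G : ℚ⟦X⟧, G.subst w = φ G := fun G => by rw [coe_substAlgHom]
  have hX : φ X = w := substAlgHom_X hs
  have hunit : φ (((1 - 108 * X) ^ 4)⁻¹) * (1 - 108 * w) ^ 4 = 1 := by
    have h := congrArg φ (PowerSeries.inv_mul_cancel ((1 - 108 * X : ℚ⟦X⟧) ^ 4) (by simp))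
    simpa only [map_mul, map_pow, map_sub, map_one, map_ofNat, hX] using h
  rw [derivative_subst hs, Derivation.leibniz, derivative_subst hs, secondDerivOp]
  simp only [hφ, map_add, map_mul, map_sub, map_pow, map_one, map_ofNat, hX, smul_eq_mul]
  linear_combination -(φ (d⁄dX ℚ (d⁄dX ℚ F)) * d⁄dX ℚ w ^ 2
      + φ (d⁄dX ℚ F) * d⁄dX ℚ (d⁄dX ℚ w)) * hunit
    + φ (d⁄dX ℚ (d⁄dX ℚ F)) * φ (((1 - 108 * X) ^ 4)⁻¹) * (1 - 108 * w) ^ 2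
      * sq_one_sub_mul_sq_derivative hw1 hw
    + φ (d⁄dX ℚ F) * φ (((1 - 108 * X) ^ 4)⁻¹) * (1 - 108 * w)
      * cube_one_sub_mul_derivative_derivative hw1 hw

theorem iterate_derivative_subst (hw0 : constantCoeff w = 0) (hw1 : coeff 1 w = 1)
    (hw : (X : ℚ⟦X⟧) ^ 2 = w ^ 2 - 72 * w ^ 3) (k : ℕ) (F : ℚ⟦X⟧) :
    (d⁄dX ℚ)^[2 * k] (F.subst w) = (secondDerivOp^[k] F).subst w := by
  induction k with
  | zero => rfl
  | succ k ih =>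
    rw [show 2 * (k + 1) = 2 + 2 * k by ring, Function.iterate_add_apply, ih,
      Function.iterate_succ_apply' secondDerivOp]
    exact derivative_derivative_subst hw0 hw1 hw _

end Curve

noncomputable def conjTwistedDeriv (m : ℕ) : ℚ⟦X⟧ →ₗ[ℚ] ℚ⟦X⟧ :=
  twistedDeriv (1 - 108 * Polynomial.X) + (108 * m : ℚ) • LinearMap.id

theorem coe_one_sub_mul_X : ((1 - 108 * Polynomial.X : Polynomial ℚ) : ℚ⟦X⟧) = 1 - 108 * X := by
  simp

theorem pow_mul_twistedDeriv (m : ℕ) (G : ℚ⟦X⟧) :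
    (1 - 108 * X) ^ m * twistedDeriv (1 - 108 * Polynomial.X) G =
      conjTwistedDeriv m ((1 - 108 * X) ^ m * G) := by
  have h := twistedDeriv_coe_pow_mul (u := 1 - 108 * Polynomial.X) m G
  have hd : ((Polynomial.derivative (1 - 108 * Polynomial.X : Polynomial ℚ)) : ℚ⟦X⟧) = -108 := by
    simp
  rw [coe_one_sub_mul_X, hd] at h
  rw [conjTwistedDeriv, LinearMap.add_apply, LinearMap.smul_apply, LinearMap.id_apply, h,
    smul_eq_C_mul]
  simp only [map_mul, map_natCast, map_ofNat]
  ring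

theorem pow_mul_secondDerivOp (m : ℕ) (G : ℚ⟦X⟧) :
    (1 - 108 * X) ^ (m + 4) * secondDerivOp G =
      (1 - 72 * X) * conjTwistedDeriv m (conjTwistedDeriv m ((1 - 108 * X) ^ m * G))
        + (180 - 11664 * X) * conjTwistedDeriv m ((1 - 108 * X) ^ m * G) := by
  have hinv : ((1 - 108 * X : ℚ⟦X⟧) ^ 4)⁻¹ * (1 - 108 * X) ^ 4 = 1 :=
    PowerSeries.inv_mul_cancel _ (by simp)
  rw [← pow_mul_twistedDeriv, ← pow_mul_twistedDeriv, secondDerivOp]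
  simp only [twistedDeriv_apply, coe_one_sub_mul_X, Derivation.leibniz, smul_eq_mul, map_sub,
    Derivation.map_one_eq_zero, derivative_X, derivative_ofNat]
  linear_combination (1 - 108 * X) ^ m * ((1 - 72 * X) * (1 - 108 * X) ^ 2 * d⁄dX ℚ (d⁄dX ℚ G)
    + (72 - 3888 * X) * (1 - 108 * X) * d⁄dX ℚ G) * hinv

theorem conjTwistedDeriv_comp_mem_diffOpSpan (m : ℕ) {d n : ℕ} {Φ : ℚ⟦X⟧ → ℚ⟦X⟧}
    (hΦ : Φ ∈ diffOpSpan (1 - 108 * Polynomial.X) d n) :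
    conjTwistedDeriv m ∘ Φ ∈ diffOpSpan (1 - 108 * Polynomial.X) d (n + 1) :=
  twistedDeriv_add_smul_comp_mem_diffOpSpan (by compute_degree) _ hΦ

theorem pow_mul_secondDerivOp_comp_mem_diffOpSpan {m d n : ℕ} {Ψ : ℚ⟦X⟧ → ℚ⟦X⟧}
    (h : conjTwistedDeriv m ∘ (fun f => (1 - 108 * X) ^ m * Ψ f) ∈
      diffOpSpan (1 - 108 * Polynomial.X) d n) :
    (fun f => (1 - 108 * X) ^ (m + 4) * secondDerivOp (Ψ f)) ∈
      diffOpSpan (1 - 108 * Polynomial.X) (d + 1) (n + 1) := by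
  have hp : (1 - 72 * Polynomial.X : Polynomial ℚ).natDegree ≤ 1 := by compute_degree
  have hq : (180 - 11664 * Polynomial.X : Polynomial ℚ).natDegree ≤ 1 := by compute_degree
  have hsplit : (fun f => (1 - 108 * X) ^ (m + 4) * secondDerivOp (Ψ f)) =
      (fun f => ((1 - 72 * Polynomial.X : Polynomial ℚ) : ℚ⟦X⟧) *
          (conjTwistedDeriv m ∘ (conjTwistedDeriv m ∘ fun f => (1 - 108 * X) ^ m * Ψ f)) f)
        + (fun f => ((180 - 11664 * Polynomial.X : Polynomial ℚ) : ℚ⟦X⟧) *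
          (conjTwistedDeriv m ∘ fun f => (1 - 108 * X) ^ m * Ψ f) f) := by
    ext f : 1
    simp [pow_mul_secondDerivOp]
  rw [hsplit]
  exact add_mem (coe_mul_comp_mem_diffOpSpan hp (conjTwistedDeriv_comp_mem_diffOpSpan m h))
    (diffOpSpan_mono le_rfl n.le_succ (coe_mul_comp_mem_diffOpSpan hq h))

theorem pow_mul_iterate_secondDerivOp_mem_diffOpSpan {k : ℕ} (hk : 1 ≤ k) :
    (fun f => (1 - 108 * X) ^ (4 * k) * secondDerivOp^[k] f) ∈
      diffOpSpan (1 - 108 * Polynomial.X) k (2 * k) := by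
  induction k, hk using Nat.le_induction with
  | base =>
    have h : conjTwistedDeriv 0 ∘ (fun f => (1 - 108 * X) ^ 0 * id f) ∈
        diffOpSpan (1 - 108 * Polynomial.X) 0 1 := by
      refine Submodule.subset_span ⟨1, by simp, 1, by simp, ?_⟩
      ext f : 1
      simp [conjTwistedDeriv, twistedDeriv_apply]
    simpa using pow_mul_secondDerivOp_comp_mem_diffOpSpan h
  | succ k hk ih =>
    have h := pow_mul_secondDerivOp_comp_mem_diffOpSpan
      (conjTwistedDeriv_comp_mem_diffOpSpan (4 * k) ih)
    rw [show 4 * (k + 1) = 4 * k + 4 by ring, show 2 * (k + 1) = 2 * k + 1 + 1 by ring]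
    simpa only [Function.iterate_succ_apply'] using h

theorem stmt1 (w : PowerSeries ℚ) (hw0 : constantCoeff w = 0) (hw1 : coeff 1 w = 1)
    (hw : (X : ℚ⟦X⟧) ^ 2 = w ^ 2 - 72 * w ^ 3) (k : ℕ) (hk : 1 ≤ k) :
    ∃ T : ℕ → Polynomial ℚ,
      (∀ i ∈ Finset.Icc 1 (2 * k), (T i).natDegree ≤ k) ∧
      ∀ f : PowerSeries ℚ,
        (1 - 108 * w) ^ (4 * k) * D^[2 * k] (psSubst w f) =
          ∑ i ∈ Finset.Icc 1 (2 * k),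
            Polynomial.aeval w (T i) * (1 - 108 * w) ^ i * psSubst w (D^[i] f) := by
  obtain ⟨T, hTdeg, hT⟩ :=
    exists_eq_sum_of_mem_diffOpSpan (pow_mul_iterate_secondDerivOp_mem_diffOpSpan hk)
  refine ⟨T, fun i _ => hTdeg i, fun f => ?_⟩
  have hs : HasSubst w := .of_constantCoeff_zero' hw0
  have hu : (1 - 108 * X : ℚ⟦X⟧).subst w = 1 - 108 * w := by
    rw [← coe_substAlgHom hs, map_sub, map_one, map_mul, map_ofNat, substAlgHom_X]
  simp only [psSubst_eq_subst hw0, show D = ⇑(d⁄dX ℚ) from rfl,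
    iterate_derivative_subst hw0 hw1 hw]
  rw [← hu, ← subst_pow hs, ← subst_mul hs, hT, ← coe_substAlgHom hs, map_sum]
  refine Finset.sum_congr rfl fun i _ => ?_
  simp [coe_substAlgHom, subst_mul hs, subst_coe hs, subst_pow hs, hu]
end

section
/- For every integer g ≥ 1 there exist polynomials Q_g, R_g ∈ ℚ[y], each of degree at most 2g − 1, such that (1 − 108w)^{5g−1} · W_g = w · Q_g(w) and (1 − 108w)^{5g−1} · Ṽ_g = (1 − 6v) · R_g(w), where P(w) denotes substitution of the power series w into the polynomial P. In particular, Ṽ₁ = 54·(1 − 6v)·(1 − 108w)⁻⁴ and W₁ = 162·w·(5 − 324w)·(1 − 108w)⁻⁴. -/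
/-!
Write `u = 1 - 6v` and `t = 1 - 108w`. The genus-zero equations give `u² = 1 - 72w`,
`t·w' = u` and `t·u' = -36`. Hence the derivative of `P(w)/tᵐ` is `u·P₁(w)/t^{m+2}` with
`deg P₁ ≤ deg P`, and the derivative of `u·P(w)/tᵐ` is `P₁(w)/t^{m+2}` with
`deg P₁ ≤ deg P + 1`: every `D²` adds 4 to the pole order and 1 to the degree, and preserves
whether the factor `u` is present.
In genus `g` the Toda equations are linear in `(Ṽ_g, W_g)` with matrix `[[u, -6], [-6w, u]]`,
whose determinant is `u² - 36w = t`, and every other term is built from lower genera. Solving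
the system and counting pole orders and degrees proves the claimed shapes by strong induction.
Genus one follows from `t³w'' = 72 - 3888w` and `t³v'' = 648u`.
-/

open PowerSeries

open scoped Polynomial
open Polynomial (aeval)

theorem Polynomial.natDegree_derivative_mul_le {R : Type*} [CommSemiring R] {p q : R[X]} {d : ℕ}
    (hp : p.natDegree ≤ d) (hq : q.natDegree ≤ 1) :
    (Polynomial.derivative p * q).natDegree ≤ d := by
  rcases Nat.eq_zero_or_pos p.natDegree with h0 | hpos
  · obtain ⟨c, rfl⟩ := Polynomial.natDegree_eq_zero.mp h0
    simp
  · have := Polynomial.natDegree_derivative_lt hpos.ne'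
    exact (Polynomial.natDegree_mul_le_of_le le_rfl hq).trans (by omega)

theorem Derivation.map_pow_mul_self {R B : Type*} [CommSemiring R] [CommRing B] [Algebra R B]
    (δ : Derivation R B B) (a : B) (n : ℕ) : δ (a ^ n) * a = n * a ^ n * δ a := by
  rw [Derivation.leibniz_pow]
  rcases n with _ | n
  · simp
  · simp only [nsmul_eq_mul, smul_eq_mul, Nat.add_sub_cancel]
    ring

theorem Derivation.map_ofNat {R B : Type*} [CommSemiring R] [CommSemiring B] [Algebra R B]
    (δ : Derivation R B B) (n : ℕ) [n.AtLeastTwo] : δ (no_index (OfNat.ofNat n : B)) = 0 :=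
  δ.map_natCast n

instance PowerSeries.instCharZero {R : Type*} [CommSemiring R] [CharZero R] : CharZero R⟦X⟧ :=
  charZero_of_injective_algebraMap (R := R) (algebraMap_eq (R := R) ▸ C_injective)

theorem D_apply (f : ℚ⟦X⟧) : D f = d⁄dX ℚ f := rfl

section HasForm

variable {A : Type*} [CommRing A] [Algebra ℚ A] {w e f g : A} {m d : ℕ}

def HasForm (w e : A) (m d : ℕ) (f : A) : Prop :=
  ∃ P : ℚ[X], P.natDegree ≤ d ∧ (1 - 108 * w) ^ m * f = e * aeval w P

theorem HasForm.zero : HasForm w e m d 0 := ⟨0, by simp, by simp⟩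

theorem HasForm.add (hf : HasForm w e m d f) (hg : HasForm w e m d g) :
    HasForm w e m d (f + g) := by
  obtain ⟨P, hPd, hP⟩ := hf
  obtain ⟨Q, hQd, hQ⟩ := hg
  exact ⟨P + Q, Polynomial.natDegree_add_le_of_degree_le hPd hQd, by
    rw [map_add]; linear_combination hP + hQ⟩

theorem HasForm.sum {ι : Type*} {s : Finset ι} {f : ι → A}
    (h : ∀ i ∈ s, HasForm w e m d (f i)) : HasForm w e m d (∑ i ∈ s, f i) :=
  Finset.sum_induction f _ (fun _ _ ↦ HasForm.add) HasForm.zero h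

theorem HasForm.smul (c : ℚ) (hf : HasForm w e m d f) : HasForm w e m d (c • f) := by
  obtain ⟨P, hPd, hP⟩ := hf
  refine ⟨c • P, (Polynomial.natDegree_smul_le c P).trans hPd, ?_⟩
  rw [map_smul, mul_smul_comm, mul_smul_comm, hP]

theorem HasForm.mul_left (c : A) (hf : HasForm w e m d f) : HasForm w (c * e) m d (c * f) := by
  obtain ⟨P, hPd, hP⟩ := hf
  exact ⟨P, hPd, by linear_combination c * hP⟩

theorem HasForm.mul {e' f' : A} {m' d' : ℕ} (hf : HasForm w e m d f)
    (hf' : HasForm w e' m' d' f') : HasForm w (e * e') (m + m') (d + d') (f * f') := by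
  obtain ⟨P, hPd, hP⟩ := hf
  obtain ⟨Q, hQd, hQ⟩ := hf'
  refine ⟨P * Q, Polynomial.natDegree_mul_le_of_le hPd hQd, ?_⟩
  rw [map_mul, pow_add]
  linear_combination (1 - 108 * w) ^ m' * f' * hP + e * aeval w P * hQ

theorem HasForm.ofNat_mul (n : ℕ) [n.AtLeastTwo] (hf : HasForm w e m d f) :
    HasForm w e m d (OfNat.ofNat n * f) := by
  obtain ⟨P, hPd, hP⟩ := hf
  refine ⟨OfNat.ofNat n * P,
    (Polynomial.natDegree_mul_le_of_le (m := 0) (by simp) hPd).trans (by omega), ?_⟩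
  rw [map_mul, map_ofNat]
  linear_combination (OfNat.ofNat n : A) * hP

theorem HasForm.absorb {E : ℚ[X]} {k : ℕ} (hf : HasForm w (e * aeval w E) m d f)
    (hE : E.natDegree ≤ k) : HasForm w e m (d + k) f := by
  obtain ⟨P, hPd, hP⟩ := hf
  refine ⟨E * P, (Polynomial.natDegree_mul_le_of_le hE hPd).trans (by omega), ?_⟩
  rw [map_mul, hP, mul_assoc]

theorem HasForm.absorb_w {e' : A} (hf : HasForm w e' m d f) (he : e' = e * w) :
    HasForm w e m (d + 1) f := by
  have hX : HasForm w (e * aeval w (Polynomial.X : ℚ[X])) m d f := by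
    rwa [Polynomial.aeval_X, ← he]
  exact hX.absorb Polynomial.natDegree_X_le

theorem HasForm.of_mul_denominator (hf : HasForm w e m d ((1 - 108 * w) * f)) :
    HasForm w e (m + 1) d f := by
  obtain ⟨P, hPd, hP⟩ := hf
  exact ⟨P, hPd, by rw [pow_succ, mul_assoc, hP]⟩

theorem HasForm.pad (hf : HasForm w e m d f) (k : ℕ) : HasForm w e (m + k) (d + k) f := by
  obtain ⟨P, hPd, hP⟩ := hf
  refine ⟨(1 - 108 * Polynomial.X) ^ k * P, ?_, ?_⟩
  · refine (Polynomial.natDegree_mul_le_of_le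
      (Polynomial.natDegree_pow_le_of_le (m := 1) k ?_) hPd).trans (by omega)
    compute_degree!
  · simp only [map_mul, map_pow, map_sub, map_one, map_ofNat, Polynomial.aeval_X, pow_add]
    linear_combination (1 - 108 * w) ^ k * hP

theorem HasForm.mono (hf : HasForm w e m d f) {m' d' : ℕ} (hm : m ≤ m')
    (hd : d + (m' - m) ≤ d') : HasForm w e m' d' f := by
  obtain ⟨P, hPd, hP⟩ := hf.pad (m' - m)
  exact ⟨P, hPd.trans hd, by rwa [Nat.add_sub_cancel' hm] at hP⟩

end HasForm

structure GenusZeroRelations (v w : ℚ⟦X⟧) : Prop where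
  sq : (1 - 6 * v) ^ 2 = 1 - 72 * w
  deriv_v : (1 - 108 * w) * D v = 6
  deriv_w : (1 - 108 * w) * D w = 1 - 6 * v

theorem genusZeroRelations_of_eq {v w : ℚ⟦X⟧} (hv0 : constantCoeff v = 0)
    (hv : 6 * (X : ℚ⟦X⟧) = (1 - 9 * v + 18 * v ^ 2) * v) (hw : w = X * (1 - 6 * v)⁻¹) :
    GenusZeroRelations v w := by
  have hu0 : constantCoeff (1 - 6 * v) ≠ 0 := by simp [hv0]
  have hu : (1 - 6 * v) ≠ 0 := fun h ↦ hu0 (by rw [h, map_zero])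
  have hxw : (1 - 6 * v) * w = X := by
    rw [hw, mul_left_comm, PowerSeries.mul_inv_cancel _ hu0, mul_one]
  have sq : (1 - 6 * v) ^ 2 = 1 - 72 * w :=
    mul_left_cancel₀ hu (by linear_combination 12 * hv + 72 * hxw)
  have hDsq := congrArg D sq
  have hDxw := congrArg D hxw
  simp only [D_apply, Derivation.leibniz_pow, map_sub, Derivation.leibniz,
    Derivation.map_one_eq_zero, Derivation.map_ofNat, derivative_X, smul_eq_mul,
    nsmul_eq_mul] at hDsq hDxw
  have hDv : (1 - 6 * v) * D v = 6 * D w :=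
    mul_left_cancel₀ (by norm_num : (12 : ℚ⟦X⟧) ≠ 0) (by
      simp only [D_apply]
      linear_combination -hDsq)
  have deriv_v : (1 - 108 * w) * D v = 6 := by
    simp only [D_apply] at hDv ⊢
    linear_combination 6 * hDxw + (1 - 6 * v) * hDv - d⁄dX ℚ v * sq
  refine ⟨sq, deriv_v, mul_left_cancel₀ (by norm_num : (6 : ℚ⟦X⟧) ≠ 0) ?_⟩
  linear_combination (1 - 6 * v) * deriv_v - (1 - 108 * w) * hDv

namespace GenusZeroRelations

variable {v w : ℚ⟦X⟧}

theorem deriv_one_sub (hz : GenusZeroRelations v w) : (1 - 108 * w) * D (1 - 6 * v) = -36 := by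
  have h := hz.deriv_v
  simp only [D_apply, map_sub, Derivation.leibniz, Derivation.map_one_eq_zero,
    Derivation.map_ofNat, smul_eq_mul] at h ⊢
  linear_combination -6 * h

theorem denom_mul_deriv_denom (hz : GenusZeroRelations v w) :
    (1 - 108 * w) * D (1 - 108 * w) = -108 * (1 - 6 * v) := by
  have h := hz.deriv_w
  simp only [D_apply, map_sub, Derivation.leibniz, Derivation.map_one_eq_zero,
    Derivation.map_ofNat, smul_eq_mul] at h ⊢
  linear_combination -108 * h

end GenusZeroRelations

section Derivatives

variable {v w f : ℚ⟦X⟧} {m d : ℕ}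

theorem HasForm.deriv_of_one (hz : GenusZeroRelations v w) (hf : HasForm w 1 m d f) :
    HasForm w (1 - 6 * v) (m + 2) d (D f) := by
  obtain ⟨P, hPd, hP⟩ := hf
  refine ⟨Polynomial.derivative P * (1 - 108 * Polynomial.X) + Polynomial.C (108 * m : ℚ) * P,
    Polynomial.natDegree_add_le_of_degree_le
      (Polynomial.natDegree_derivative_mul_le hPd (by compute_degree!))
      ((Polynomial.natDegree_C_mul_le _ _).trans hPd), ?_⟩
  have hD := congrArg D hP
  have hpow := (d⁄dX ℚ).map_pow_mul_self (1 - 108 * w) m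
  have hw := hz.deriv_w
  have ht := hz.denom_mul_deriv_denom
  simp only [D_apply, one_mul, Derivation.leibniz, Derivation.map_aeval, smul_eq_mul]
    at hD hw ht ⊢
  simp only [map_add, map_mul, map_sub, map_one, map_ofNat, Polynomial.aeval_X,
    map_natCast]
  linear_combination (1 - 108 * w) ^ 2 * hD - (1 - 108 * w) * f * hpow
    - (m : ℚ⟦X⟧) * (1 - 108 * w) ^ m * f * ht + (108 * (m : ℚ⟦X⟧)) * (1 - 6 * v) * hP
    + aeval w (Polynomial.derivative P) * (1 - 108 * w) * hw

theorem HasForm.deriv_of_u (hz : GenusZeroRelations v w) (hf : HasForm w (1 - 6 * v) m d f) :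
    HasForm w 1 (m + 2) (d + 1) (D f) := by
  obtain ⟨P, hPd, hP⟩ := hf
  have h72 : (1 - 72 * Polynomial.X : ℚ[X]).natDegree ≤ 1 := by compute_degree!
  refine ⟨(Polynomial.C (-36 : ℚ) * P + (1 - 72 * Polynomial.X) * Polynomial.derivative P)
      * (1 - 108 * Polynomial.X) + Polynomial.C (108 * m : ℚ) * ((1 - 72 * Polynomial.X) * P),
    Polynomial.natDegree_add_le_of_degree_le ?_ ?_, ?_⟩
  · refine Polynomial.natDegree_mul_le_of_le (Polynomial.natDegree_add_le_of_degree_le ?_ ?_)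
      (by compute_degree!)
    · exact (Polynomial.natDegree_C_mul_le _ _).trans (by omega)
    · rw [mul_comm]
      exact (Polynomial.natDegree_derivative_mul_le hPd h72).trans (by omega)
  · exact (Polynomial.natDegree_C_mul_le _ _).trans
      ((Polynomial.natDegree_mul_le_of_le h72 hPd).trans (by omega))
  have hD := congrArg D hP
  have hpow := (d⁄dX ℚ).map_pow_mul_self (1 - 108 * w) m
  have hu := hz.deriv_one_sub
  have hw := hz.deriv_w
  have ht := hz.denom_mul_deriv_denom
  simp only [D_apply, Derivation.leibniz, Derivation.map_aeval, smul_eq_mul] at hD hu hw ht ⊢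
  simp only [map_add, map_mul, map_sub, map_one, map_ofNat, map_neg, Polynomial.aeval_X,
    map_natCast]
  linear_combination (1 - 108 * w) ^ 2 * hD - (1 - 108 * w) * f * hpow
    - (m : ℚ⟦X⟧) * (1 - 108 * w) ^ m * f * ht
    + (1 - 6 * v) * aeval w (Polynomial.derivative P) * (1 - 108 * w) * hw
    + (108 * (m : ℚ⟦X⟧)) * (1 - 6 * v) * hP + aeval w P * (1 - 108 * w) * hu
    + (108 * (m : ℚ⟦X⟧) * aeval w P
      + aeval w (Polynomial.derivative P) * (1 - 108 * w)) * hz.sq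

theorem HasForm.absorb_sq {e e' : ℚ⟦X⟧} (hz : GenusZeroRelations v w)
    (hf : HasForm w e' m d f) (he : e' = e * (1 - 6 * v) ^ 2) : HasForm w e m (d + 1) f := by
  have hE : (1 - 6 * v) ^ 2 = aeval w (1 - 72 * Polynomial.X : ℚ[X]) := by
    simp only [hz.sq, map_sub, map_one, map_mul, map_ofNat, Polynomial.aeval_X]
  rw [he, hE] at hf
  exact hf.absorb (by compute_degree!)

theorem HasForm.iterate_deriv_of_one (hz : GenusZeroRelations v w) (k : ℕ)
    (hf : HasForm w 1 m d f) : HasForm w 1 (m + 4 * k) (d + k) (D^[2 * k] f) := by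
  induction k generalizing m d f with
  | zero => simpa using hf
  | succ k ih =>
    rw [show 2 * (k + 1) = 2 * k + 2 by ring, Function.iterate_add_apply]
    exact (ih ((hf.deriv_of_one hz).deriv_of_u hz)).mono (by omega) (by omega)

theorem HasForm.iterate_deriv_of_u (hz : GenusZeroRelations v w) (k : ℕ)
    (hf : HasForm w (1 - 6 * v) m d f) :
    HasForm w (1 - 6 * v) (m + 4 * k) (d + k) (D^[2 * k] f) := by
  induction k generalizing m d f with
  | zero => simpa using hf
  | succ k ih =>
    rw [show 2 * (k + 1) = 2 * k + 2 by ring, Function.iterate_add_apply]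
    exact (ih ((hf.deriv_of_u hz).deriv_of_one hz)).mono (by omega) (by omega)

end Derivatives

namespace GenusZeroRelations

variable {v w : ℚ⟦X⟧}

theorem hasForm_iterate_deriv_w (hz : GenusZeroRelations v w) {k : ℕ} (hk : 1 ≤ k) :
    HasForm w 1 (4 * k - 1) k (D^[2 * k] w) := by
  obtain ⟨j, rfl⟩ := Nat.exists_eq_add_of_le' hk
  have hDw : HasForm w (1 - 6 * v) 1 0 (D w) := ⟨1, by simp, by simpa using hz.deriv_w⟩
  rw [show 2 * (j + 1) = 2 * j + 2 by ring, Function.iterate_add_apply]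
  exact ((hDw.deriv_of_u hz).iterate_deriv_of_one hz j).mono (by omega) (by omega)

theorem hasForm_iterate_deriv_v (hz : GenusZeroRelations v w) {k : ℕ} (hk : 1 ≤ k) :
    HasForm w (1 - 6 * v) (4 * k - 1) (k - 1) (D^[2 * k] v) := by
  obtain ⟨j, rfl⟩ := Nat.exists_eq_add_of_le' hk
  have hDv : HasForm w 1 1 0 (D v) :=
    ⟨Polynomial.C 6, by simp,
      by rw [pow_one, one_mul, Polynomial.aeval_C, map_ofNat, hz.deriv_v]⟩
  rw [show 2 * (j + 1) = 2 * j + 2 by ring, Function.iterate_add_apply]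
  exact ((hDv.deriv_of_one hz).iterate_deriv_of_u hz j).mono (by omega) (by omega)

theorem deriv_deriv_w (hz : GenusZeroRelations v w) :
    (1 - 108 * w) ^ 3 * D (D w) = 72 - 3888 * w := by
  have h := congrArg D hz.deriv_w
  have hu := hz.deriv_one_sub
  have ht := hz.denom_mul_deriv_denom
  have hw := hz.deriv_w
  simp only [D_apply, Derivation.leibniz, smul_eq_mul] at h hu ht hw ⊢
  linear_combination (1 - 108 * w) ^ 2 * h + (1 - 108 * w) * hu
    - (1 - 108 * w) * (d⁄dX ℚ) w * ht + 108 * (1 - 6 * v) * hw + 108 * hz.sq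

theorem deriv_deriv_v (hz : GenusZeroRelations v w) :
    (1 - 108 * w) ^ 3 * D (D v) = 648 * (1 - 6 * v) := by
  have h := congrArg D hz.deriv_v
  have ht := hz.denom_mul_deriv_denom
  have hv := hz.deriv_v
  simp only [D_apply, Derivation.leibniz, Derivation.map_ofNat, smul_eq_mul] at h ht hv ⊢
  linear_combination (1 - 108 * w) ^ 2 * h - (1 - 108 * w) * (d⁄dX ℚ) v * ht
    + 108 * (1 - 6 * v) * hv

end GenusZeroRelations

section Toda

open Finset

variable {V W : ℕ → ℚ⟦X⟧} {g : ℕ}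

theorem Finset.Nat.mem_erase_antidiagonal {a b : ℕ} :
    (a, b) ∈ (antidiagonal g).erase (0, g) ↔ 1 ≤ a ∧ a + b = g := by
  simp only [mem_erase, ne_eq, Prod.mk.injEq, HasAntidiagonal.mem_antidiagonal]
  omega

theorem Finset.Nat.mem_erase_erase_antidiagonal {a b : ℕ} :
    (a, b) ∈ ((antidiagonal g).erase (0, g)).erase (g, 0) ↔
      1 ≤ a ∧ 1 ≤ b ∧ a + b = g := by
  simp only [mem_erase, ne_eq, Prod.mk.injEq, HasAntidiagonal.mem_antidiagonal]
  omega

theorem Finset.Nat.sum_antidiagonal_eq_add_add_sum_erase {M : Type*} [AddCommMonoid M]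
    (f : ℕ × ℕ → M) (hg : 1 ≤ g) :
    ∑ p ∈ antidiagonal g, f p
      = f (0, g) + f (g, 0) + ∑ p ∈ ((antidiagonal g).erase (0, g)).erase (g, 0), f p := by
  rw [← add_sum_erase _ _ (by simp : (0, g) ∈ antidiagonal g),
    ← add_sum_erase _ _ (Finset.Nat.mem_erase_antidiagonal.mpr ⟨hg, add_zero g⟩), add_assoc]

def todaCoeff (k : ℕ) : ℚ := 1 / ((4 : ℚ) ^ k * (2 * k).factorial)

noncomputable def todaV (V W : ℕ → ℚ⟦X⟧) (g : ℕ) : ℚ⟦X⟧ :=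
  3 * ∑ p ∈ antidiagonal g, V p.1 * V p.2
    + 6 * ∑ p ∈ antidiagonal g, C (todaCoeff p.1) * D^[2 * p.1] (W p.2)

noncomputable def todaW (V W : ℕ → ℚ⟦X⟧) (g : ℕ) : ℚ⟦X⟧ :=
  6 * ∑ p ∈ antidiagonal g, ∑ r ∈ antidiagonal p.2,
    C (todaCoeff p.1) * (W r.1 * D^[2 * p.1] (V r.2))

-- The right-hand sides without the terms that involve `V g` or `W g`.
noncomputable def todaVRest (V W : ℕ → ℚ⟦X⟧) (g : ℕ) : ℚ⟦X⟧ :=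
  3 * ∑ p ∈ ((antidiagonal g).erase (0, g)).erase (g, 0), V p.1 * V p.2
    + 6 * ∑ p ∈ (antidiagonal g).erase (0, g), C (todaCoeff p.1) * D^[2 * p.1] (W p.2)

noncomputable def todaWRest (V W : ℕ → ℚ⟦X⟧) (g : ℕ) : ℚ⟦X⟧ :=
  6 * ∑ p ∈ ((antidiagonal g).erase (0, g)).erase (g, 0), W p.1 * V p.2
    + 6 * ∑ p ∈ (antidiagonal g).erase (0, g), ∑ r ∈ antidiagonal p.2,
        C (todaCoeff p.1) * (W r.1 * D^[2 * p.1] (V r.2))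

theorem todaCoeff_zero : todaCoeff 0 = 1 := by
  simp [todaCoeff]

theorem todaV_eq (hg : 1 ≤ g) : todaV V W g = 6 * V 0 * V g + 6 * W g + todaVRest V W g := by
  rw [todaV, todaVRest, Finset.Nat.sum_antidiagonal_eq_add_add_sum_erase _ hg,
    ← add_sum_erase _ _ (by simp : (0, g) ∈ antidiagonal g)]
  simp only [todaCoeff_zero, map_one, one_mul, mul_zero, Function.iterate_zero, id_eq]
  ring

theorem todaW_eq (hg : 1 ≤ g) :
    todaW V W g = 6 * (W 0 * V g + W g * V 0) + todaWRest V W g := by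
  rw [todaW, todaWRest, ← add_sum_erase _ _ (by simp : (0, g) ∈ antidiagonal g),
    Finset.Nat.sum_antidiagonal_eq_add_add_sum_erase _ hg]
  simp only [todaCoeff_zero, map_one, one_mul, mul_zero, Function.iterate_zero, id_eq]
  ring

theorem toda_linear_solve (hsq : (1 - 6 * V 0) ^ 2 = 1 - 72 * W 0) (hg : 1 ≤ g)
    (hV : V g = todaV V W g) (hW : W g = todaW V W g) :
    (1 - 108 * W 0) * V g = (1 - 6 * V 0) * todaVRest V W g + 6 * todaWRest V W g ∧
      (1 - 108 * W 0) * W g = (1 - 6 * V 0) * todaWRest V W g + 6 * W 0 * todaVRest V W g := by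
  rw [todaV_eq hg] at hV
  rw [todaW_eq hg] at hW
  constructor
  · linear_combination (1 - 6 * V 0) * hV + 6 * hW - V g * hsq
  · linear_combination (1 - 6 * V 0) * hW + 6 * W 0 * hV - W g * hsq

end Toda

def HasTodaForm (v w : ℚ⟦X⟧) (V W : ℕ → ℚ⟦X⟧) (g : ℕ) : Prop :=
  HasForm w (1 - 6 * v) (5 * g - 1) (2 * g - 1) (V g) ∧ HasForm w w (5 * g - 1) (2 * g - 1) (W g)

section TodaInduction

open Finset

variable {v w : ℚ⟦X⟧} {V W : ℕ → ℚ⟦X⟧} {g : ℕ}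

-- For `a = 0` the truncated subtractions make this the statement `W 0 = w * 1`.
theorem hasForm_W_of_lt (hW0 : W 0 = w) (ih : ∀ a, 1 ≤ a → a < g → HasTodaForm v w V W a)
    {a : ℕ} (ha : a < g) : HasForm w w (5 * a - 1) (2 * a - 1) (W a) := by
  rcases Nat.eq_zero_or_pos a with rfl | ha0
  · exact ⟨1, by simp, by simp [hW0]⟩
  · exact (ih a ha0 ha).2

theorem hasForm_iterate_deriv_V (hz : GenusZeroRelations v w) (hV0 : V 0 = v)
    (ih : ∀ a, 1 ≤ a → a < g → HasTodaForm v w V W a) {k b : ℕ} (hkb : 1 ≤ k + b)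
    (hb : b < g) :
    HasForm w (1 - 6 * v) (5 * b + 4 * k - 1) (2 * b + k - 1) (D^[2 * k] (V b)) := by
  rcases Nat.eq_zero_or_pos b with rfl | hb0
  · rw [hV0]
    exact (hz.hasForm_iterate_deriv_v (by omega)).mono (by omega) (by omega)
  · exact ((ih b hb0 hb).1.iterate_deriv_of_u hz k).mono (by omega) (by omega)

theorem hasForm_iterate_deriv_W (hz : GenusZeroRelations v w) (hW0 : W 0 = w)
    (ih : ∀ a, 1 ≤ a → a < g → HasTodaForm v w V W a) {k h : ℕ} (hkh : 1 ≤ k + h)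
    (hh : h < g) :
    HasForm w 1 (5 * h + 4 * k - 1) (2 * h + k) (D^[2 * k] (W h)) := by
  rcases Nat.eq_zero_or_pos h with rfl | hh0
  · rw [hW0]
    exact (hz.hasForm_iterate_deriv_w (by omega)).mono (by omega) (by omega)
  · exact (((ih h hh0 hh).2.absorb_w (one_mul w).symm).iterate_deriv_of_one hz k).mono
      (by omega) (by omega)

theorem hasForm_todaVRest (hz : GenusZeroRelations v w) (hW0 : W 0 = w)
    (ih : ∀ a, 1 ≤ a → a < g → HasTodaForm v w V W a) :
    HasForm w 1 (5 * g - 2) (2 * g - 1) (todaVRest V W g) := by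
  refine (HasForm.ofNat_mul 3 (HasForm.sum ?_)).add (HasForm.ofNat_mul 6 (HasForm.sum ?_))
  · rintro ⟨a, b⟩ hp
    obtain ⟨ha, hb, hab⟩ := Finset.Nat.mem_erase_erase_antidiagonal.mp hp
    exact (((ih a ha (by omega)).1.mul (ih b hb (by omega)).1).absorb_sq hz
      (by ring)).mono (by omega) (by omega)
  · rintro ⟨k, h⟩ hp
    obtain ⟨hk, hkh⟩ := Finset.Nat.mem_erase_antidiagonal.mp hp
    rw [← smul_eq_C_mul]
    exact ((hasForm_iterate_deriv_W hz hW0 ih (by omega) (by omega)).smul _).mono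
      (by omega) (by omega)

theorem hasForm_todaWRest (hz : GenusZeroRelations v w) (hV0 : V 0 = v) (hW0 : W 0 = w)
    (ih : ∀ a, 1 ≤ a → a < g → HasTodaForm v w V W a) :
    HasForm w (w * (1 - 6 * v)) (5 * g - 2) (2 * g - 2) (todaWRest V W g) := by
  refine (HasForm.ofNat_mul 6 (HasForm.sum ?_)).add (HasForm.ofNat_mul 6 (HasForm.sum ?_))
  · rintro ⟨a, b⟩ hp
    obtain ⟨ha, hb, hab⟩ := Finset.Nat.mem_erase_erase_antidiagonal.mp hp
    have hVb := hasForm_iterate_deriv_V hz hV0 ih (k := 0) (by omega) (by omega : b < g)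
    rw [mul_zero, Function.iterate_zero, id] at hVb
    exact ((hasForm_W_of_lt hW0 ih (by omega : a < g)).mul hVb).mono (by omega) (by omega)
  · rintro ⟨k, h⟩ hp
    obtain ⟨hk, hkh⟩ := Finset.Nat.mem_erase_antidiagonal.mp hp
    refine HasForm.sum fun ⟨a, b⟩ hr ↦ ?_
    obtain hab : a + b = h := by simpa using hr
    rw [← smul_eq_C_mul]
    exact (((hasForm_W_of_lt hW0 ih (by omega : a < g)).mul
      (hasForm_iterate_deriv_V hz hV0 ih (by omega) (by omega : b < g))).smul _).mono
      (by omega) (by omega)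

theorem hasTodaForm_of_forall_lt (hz : GenusZeroRelations v w) (hV0 : V 0 = v) (hW0 : W 0 = w)
    (hg : 1 ≤ g) (hV : V g = todaV V W g) (hW : W g = todaW V W g)
    (ih : ∀ a, 1 ≤ a → a < g → HasTodaForm v w V W a) : HasTodaForm v w V W g := by
  obtain ⟨hVg, hWg⟩ := toda_linear_solve (hV0 ▸ hW0 ▸ hz.sq) hg hV hW
  rw [hV0, hW0] at hVg hWg
  have hA := hasForm_todaVRest hz hW0 ih
  have hB := hasForm_todaWRest hz hV0 hW0 ih
  have hV' : HasForm w (1 - 6 * v) (5 * g - 2) (2 * g - 1) ((1 - 108 * w) * V g) := by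
    have hu : HasForm w (1 - 6 * v) (5 * g - 2) (2 * g - 1) ((1 - 6 * v) * todaVRest V W g) := by
      simpa only [mul_one] using hA.mul_left (1 - 6 * v)
    rw [hVg]
    exact hu.add (((hB.ofNat_mul 6).absorb_w (mul_comm _ _)).mono le_rfl (by omega))
  have hW' : HasForm w w (5 * g - 2) (2 * g - 1) ((1 - 108 * w) * W g) := by
    have h6 : HasForm w w (5 * g - 2) (2 * g - 1) (6 * w * todaVRest V W g) := by
      simpa only [mul_one, ← mul_assoc] using (hA.mul_left w).ofNat_mul 6
    rw [hWg]
    exact (((hB.mul_left (1 - 6 * v)).absorb_sq hz (by ring)).mono le_rfl (by omega)).add h6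
  exact ⟨hV'.of_mul_denominator.mono (by omega) (by omega),
    hW'.of_mul_denominator.mono (by omega) (by omega)⟩

theorem hasTodaForm (hz : GenusZeroRelations v w) (hV0 : V 0 = v) (hW0 : W 0 = w)
    (hV : ∀ g, 1 ≤ g → V g = todaV V W g) (hW : ∀ g, 1 ≤ g → W g = todaW V W g) :
    ∀ g, 1 ≤ g → HasTodaForm v w V W g := by
  intro g
  induction g using Nat.strong_induction_on with
  | _ g ih =>
    exact fun hg ↦
      hasTodaForm_of_forall_lt hz hV0 hW0 hg (hV g hg) (hW g hg) fun a ha hag ↦ ih a hag ha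

theorem todaVRest_one : todaVRest V W 1 = 6 * (C (todaCoeff 1) * D (D (W 0))) := by
  rw [todaVRest, (by decide : ((antidiagonal 1).erase (0, 1)).erase (1, 0) = ∅),
    (by decide : (antidiagonal 1).erase (0, 1) = {(1, 0)})]
  simp

theorem todaWRest_one : todaWRest V W 1 = 6 * (C (todaCoeff 1) * (W 0 * D (D (V 0)))) := by
  rw [todaWRest, (by decide : ((antidiagonal 1).erase (0, 1)).erase (1, 0) = ∅),
    (by decide : (antidiagonal 1).erase (0, 1) = {(1, 0)})]
  simp

theorem toda_genus_one (hz : GenusZeroRelations v w) (hV0 : V 0 = v) (hW0 : W 0 = w)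
    (hV : V 1 = todaV V W 1) (hW : W 1 = todaW V W 1) :
    (1 - 108 * w) ^ 4 * V 1 = 54 * (1 - 6 * v) ∧
      (1 - 108 * w) ^ 4 * W 1 = 162 * w * (5 - 324 * w) := by
  obtain ⟨hV1, hW1⟩ := toda_linear_solve (hV0 ▸ hW0 ▸ hz.sq) le_rfl hV hW
  rw [todaVRest_one, todaWRest_one, hV0, hW0] at hV1 hW1
  have hc : (8 : ℚ⟦X⟧) * C (todaCoeff 1) = 1 := by
    rw [← map_ofNat C 8, ← map_mul]
    norm_num [todaCoeff]
  have hDw := hz.deriv_deriv_w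
  have hDv := hz.deriv_deriv_v
  constructor
  · linear_combination (1 - 108 * w) ^ 3 * hV1 + 6 * C (todaCoeff 1) * (1 - 6 * v) * hDw
      + 36 * C (todaCoeff 1) * w * hDv + 54 * (1 - 6 * v) * hc
  · linear_combination (1 - 108 * w) ^ 3 * hW1 + 6 * C (todaCoeff 1) * (1 - 6 * v) * w * hDv
      + 36 * C (todaCoeff 1) * w * hDw + 162 * w * (5 - 324 * w) * hc
      + 3888 * C (todaCoeff 1) * w * hz.sq

end TodaInduction

theorem stmt2 (v w : PowerSeries ℚ) (hv0 : constantCoeff v = 0)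
    (hv : 6 * (X : ℚ⟦X⟧) = (1 - 9 * v + 18 * v ^ 2) * v)
    (hw : w = X * (1 - 6 * v)⁻¹)
    (V W : ℕ → PowerSeries ℚ) (hV0 : V 0 = v) (hW0 : W 0 = w)
    (hVg : ∀ g, 1 ≤ g →
      V g = 3 * ∑ p ∈ Finset.HasAntidiagonal.antidiagonal g, V p.1 * V p.2
        + 6 * ∑ p ∈ Finset.HasAntidiagonal.antidiagonal g,
            C (1 / ((4 : ℚ) ^ p.1 * (2 * p.1).factorial)) * D^[2 * p.1] (W p.2))
    (hWg : ∀ g, 1 ≤ g →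
      W g = 6 * ∑ p ∈ Finset.HasAntidiagonal.antidiagonal g, ∑ r ∈ Finset.HasAntidiagonal.antidiagonal p.2,
            C (1 / ((4 : ℚ) ^ p.1 * (2 * p.1).factorial)) * (W r.1 * D^[2 * p.1] (V r.2))) :
    (∀ g, 1 ≤ g → ∃ Q R : Polynomial ℚ,
      Q.natDegree ≤ 2 * g - 1 ∧ R.natDegree ≤ 2 * g - 1 ∧
      (1 - 108 * w) ^ (5 * g - 1) * W g = w * Polynomial.aeval w Q ∧
      (1 - 108 * w) ^ (5 * g - 1) * V g = (1 - 6 * v) * Polynomial.aeval w R) ∧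
    V 1 = 54 * (1 - 6 * v) * ((1 - 108 * w) ^ 4)⁻¹ ∧
    W 1 = 162 * w * (5 - 324 * w) * ((1 - 108 * w) ^ 4)⁻¹ := by
  have hz := genusZeroRelations_of_eq hv0 hv hw
  obtain ⟨hV1, hW1⟩ := toda_genus_one hz hV0 hW0 (hVg 1 le_rfl) (hWg 1 le_rfl)
  have ht : constantCoeff ((1 - 108 * w) ^ 4) ≠ 0 := by simp [hw]
  refine ⟨fun g hg ↦ ?_, ?_, ?_⟩
  · obtain ⟨⟨R, hR, hRe⟩, ⟨Q, hQ, hQe⟩⟩ := hasTodaForm hz hV0 hW0 hVg hWg g hg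
    exact ⟨Q, R, hQ, hR, hQe, hRe⟩
  · rw [PowerSeries.eq_mul_inv_iff_mul_eq ht, mul_comm, hV1]
  · rw [PowerSeries.eq_mul_inv_iff_mul_eq ht, mul_comm, hW1]
end

section
/- For every integer g ≥ 1 one has Σ_{k=0}^{g} ( (2k − 1) / ( (2k)! · (2g − 2k + 2)! ) ) · B_{2k} = 0, while for g = 0 the same sum equals −1/2. (Equivalently: the sequence C̃^{(g)} := B_{2g} is the unique solution of the recursion Σ_{k=0}^{g} (1/(2g−2k+2)!)·((2k−1)/(2k)!)·C̃^{(k)} = −(1/2)·δ_{g,0} for all g ≥ 0; this recursion is the one satisfied by the constant terms in the genus expansion of the even-valence map generating functions, and it proves that the constant C^{(g)} there equals −B_{2g}/(4g(g−1)) for g ≥ 2.) -/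
open Finset Nat

-- odd bernoulli vanish
lemma bern_odd {n : ℕ} (h : Odd n) (h1 : 1 < n) : bernoulli n = 0 := by
  rw [bernoulli_eq_bernoulli'_of_ne_one (by omega), bernoulli'_eq_zero_of_odd h h1]

lemma aux_nminus (n : ℕ) (hn : 3 ≤ n) :
    ∑ i ∈ Finset.range (n + 1), (((n : ℚ) - i) * (n.choose i)) * bernoulli i
      = n * bernoulli (n - 1) := by
  obtain ⟨m, rfl⟩ : ∃ m, n = m + 1 := ⟨n - 1, by omega⟩
  rw [Finset.sum_range_succ]
  have hlast : (((m + 1 : ℕ) : ℚ) - ((m + 1 : ℕ) : ℚ)) * ((m + 1).choose (m + 1)) *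
      bernoulli (m + 1) = 0 := by
    simp
  push_cast
  rw [show (((m:ℚ)+1) - ((m:ℚ)+1)) * (((m + 1).choose (m + 1) : ℚ)) * bernoulli (m + 1) = 0 by ring]
  rw [add_zero]
  have hterm : ∀ i ∈ Finset.range (m + 1),
      (((m : ℚ) + 1) - i) * ((m + 1).choose i) * bernoulli i
        = ((m : ℚ) + 1) * ((m.choose i : ℚ) * bernoulli i) := by
    intro i hi
    rw [Finset.mem_range] at hi
    have h := Nat.choose_mul_succ_eq m i
    have hc : ((m.choose i : ℚ)) * ((m:ℚ) + 1) = ((m + 1).choose i : ℚ) * (((m:ℚ) + 1) - i) := by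
      have h2 := congrArg (fun x : ℕ => (x : ℚ)) h
      push_cast [Nat.cast_sub (by omega : i ≤ m + 1)] at h2
      linarith [h2]
    linear_combination (-(bernoulli i)) * hc
  rw [Finset.sum_congr rfl hterm, ← Finset.mul_sum]
  rw [Finset.sum_range_succ, sum_bernoulli]
  have hm1 : m ≠ 1 := by omega
  simp [hm1, Nat.choose_self, Nat.add_sub_cancel]

lemma aux_all (n : ℕ) (hn : 3 ≤ n) :
    ∑ i ∈ Finset.range (n + 1), (((i : ℚ) - 1) * (n.choose i)) * bernoulli i
      = ((n : ℚ) - 1) * bernoulli n - n * bernoulli (n - 1) := by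
  have h1 : ∑ i ∈ Finset.range (n + 1), ((n.choose i : ℚ)) * bernoulli i = bernoulli n := by
    rw [Finset.sum_range_succ, sum_bernoulli]
    simp [show n ≠ 1 by omega]
  have h2 := aux_nminus n hn
  have key : ∀ i ∈ Finset.range (n + 1),
      (((i : ℚ) - 1) * (n.choose i)) * bernoulli i
        = (n : ℚ) * ((n.choose i : ℚ) * bernoulli i)
          - ((((n : ℚ) - i) * (n.choose i)) * bernoulli i)
          - ((n.choose i : ℚ) * bernoulli i) := by
    intro i _; ring
  rw [Finset.sum_congr rfl key]
  simp only [Finset.sum_sub_distrib, ← Finset.mul_sum, h1, h2]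
  ring

lemma sum_double (F : ℕ → ℚ) (m : ℕ) :
    ∑ i ∈ Finset.range (2 * m), F i = ∑ k ∈ Finset.range m, (F (2 * k) + F (2 * k + 1)) := by
  induction m with
  | zero => simp
  | succ m ih =>
      rw [show 2 * (m + 1) = 2 * m + 1 + 1 by ring, Finset.sum_range_succ, Finset.sum_range_succ,
        ih, Finset.sum_range_succ]
      ring

theorem stmt14 :
    (∀ g : ℕ, 1 ≤ g →
      ∑ k ∈ Finset.range (g + 1),
        (2 * (k : ℚ) - 1) / (((2 * k).factorial : ℚ) * ((2 * g - 2 * k + 2).factorial : ℚ))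
          * bernoulli (2 * k) = 0) ∧
    (∑ k ∈ Finset.range (0 + 1),
        (2 * (k : ℚ) - 1) / (((2 * k).factorial : ℚ) * ((2 * 0 - 2 * k + 2).factorial : ℚ))
          * bernoulli (2 * k) = -(1 / 2)) := by
  constructor
  · intro g hg
    set n : ℕ := 2 * g + 2 with hn
    set F : ℕ → ℚ := fun i => (((i : ℚ) - 1) * (n.choose i)) * bernoulli i with hF
    have hodd : ∀ k, F (2 * k + 1) = 0 := by
      intro k
      rcases Nat.eq_zero_or_pos k with rfl | hk
      · simp [hF]
      · have : bernoulli (2 * k + 1) = 0 := bern_odd ⟨k, by ring⟩ (by omega)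
        simp [hF, this]
    have hall : ∑ i ∈ Finset.range (n + 1), F i = ((n : ℚ) - 1) * bernoulli n := by
      rw [aux_all n (by omega)]
      have : bernoulli (n - 1) = 0 := bern_odd ⟨g, by omega⟩ (by omega)
      rw [this]; ring
    have hsplit : ∑ i ∈ Finset.range (n + 1), F i
        = (∑ k ∈ Finset.range (g + 1), F (2 * k)) + F n := by
      rw [show n + 1 = 2 * (g + 1) + 1 by omega, Finset.sum_range_succ,
        sum_double F (g + 1)]
      simp only [hodd, add_zero]
      congr 1
    have hFn : F n = ((n : ℚ) - 1) * bernoulli n := by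
      simp [hF, Nat.choose_self]
    have heven : ∑ k ∈ Finset.range (g + 1), F (2 * k) = 0 := by
      have := hsplit.symm.trans hall
      rw [hFn] at this
      linarith
    have hterm : ∀ k ∈ Finset.range (g + 1),
        (2 * (k : ℚ) - 1) / (((2 * k).factorial : ℚ) * ((2 * g - 2 * k + 2).factorial : ℚ))
          * bernoulli (2 * k) = F (2 * k) / (n.factorial : ℚ) := by
      intro k hk
      rw [Finset.mem_range] at hk
      have hle : 2 * k ≤ n := by omega
      have hsub : 2 * g - 2 * k + 2 = n - 2 * k := by omega
      have hc : ((n.choose (2 * k) : ℚ))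
          = (n.factorial : ℚ) / (((2 * k).factorial : ℚ) * ((n - 2 * k).factorial : ℚ)) :=
        Nat.cast_choose ℚ hle
      rw [hsub, hF]
      simp only [hc]
      have h1 : (((2 * k).factorial : ℚ)) ≠ 0 := Nat.cast_ne_zero.mpr (Nat.factorial_ne_zero _)
      have h2 : (((n - 2 * k).factorial : ℚ)) ≠ 0 := Nat.cast_ne_zero.mpr (Nat.factorial_ne_zero _)
      have h3 : ((n.factorial : ℚ)) ≠ 0 := Nat.cast_ne_zero.mpr (Nat.factorial_ne_zero _)
      push_cast
      field_simp
    rw [Finset.sum_congr rfl hterm, ← Finset.sum_div, heven, zero_div]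
  · norm_num
end
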